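/- If G is a graph whose Shannon OR-capacity is attained in finite length, i.e., C_OR(G) = ω(G^k)^(1/k) for some positive integer k, then the Shannon OR-capacity of the Mycielskian of G is strictly larger: C_OR(M(G)) > C_OR(G). -/

import Mathlib

/-- The `t`-th OR-power of a simple graph. -/
def ORpow {V : Type*} (G : SimpleGraph V) (t : ℕ) : SimpleGraph (Fin t → V) where
  Adj x y := ∃ i, G.Adj (x i) (y i)
  symm := ⟨fun _ _ ⟨i, h⟩ => ⟨i, h.symm⟩⟩
  loopless := ⟨fun _ ⟨_, h⟩ => G.irrefl h⟩

/-- The Mycielskian `M(G)`: vertex set `V(G) × {0,1} ∪ {z}`, with edges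
`{(v,0),(w,i)}` for `{v,w} ∈ E(G)`, `i ∈ {0,1}`, and `{z,(v,1)}` for all `v`. -/
def mycielskian {V : Type*} (G : SimpleGraph V) : SimpleGraph (V × Bool ⊕ Unit) where
  Adj x y :=
    match x, y with
    | Sum.inl (v, a), Sum.inl (w, b) => G.Adj v w ∧ (a = false ∨ b = false)
    | Sum.inl (_, b), Sum.inr _ => b = true
    | Sum.inr _, Sum.inl (_, b) => b = true
    | Sum.inr _, Sum.inr _ => False
  symm := by
    constructor
    rintro (⟨v, a⟩ | ⟨⟩) (⟨w, b⟩ | ⟨⟩) h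
    · exact ⟨h.1.symm, h.2.symm⟩
    · exact h
    · exact h
    · exact h.elim
  loopless := by
    constructor
    rintro (⟨v, a⟩ | ⟨⟩) h
    · exact G.irrefl h.1
    · exact h.elim


open Finset Filter

/-- From an injective family with pairwise adjacent (distinct) images we get a lower
bound on the clique number. -/
lemma le_cliqueNum_of_family {α : Type*} [Fintype α] (H : SimpleGraph α) {ι : Type*}
    [Fintype ι] (f : ι → α) (hinj : Function.Injective f)
    (hadj : ∀ i j, i ≠ j → H.Adj (f i) (f j)) : Fintype.card ι ≤ H.cliqueNum := by
  classical
  have hc : H.IsClique (Finset.univ.map ⟨f, hinj⟩ : Finset α) := by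
    intro a ha b hb hne
    simp only [Finset.coe_map, Set.mem_image, Finset.mem_coe, Finset.mem_univ, true_and,
      Function.Embedding.coeFn_mk, Finset.coe_univ, Set.image_univ, Set.mem_range] at ha hb
    obtain ⟨i, rfl⟩ := ha
    obtain ⟨j, rfl⟩ := hb
    exact hadj i j (by rintro rfl; exact hne rfl)
  have h2 := @SimpleGraph.IsClique.card_le_cliqueNum α H _ _ hc
  simpa using h2

/-- Power construction: an adjacent family for `ORpow H s` yields one for
`ORpow H (M * s)` indexed by `Fin M → ι`. -/
lemma ORpow_family_pow {β : Type*} (H : SimpleGraph β) {s : ℕ} {ι : Type*}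
    (g : ι → (Fin s → β)) (hinj : Function.Injective g)
    (hadj : ∀ i j, i ≠ j → (ORpow H s).Adj (g i) (g j)) (M : ℕ) :
    ∃ F : (Fin M → ι) → (Fin (M * s) → β), Function.Injective F ∧
      ∀ w w', w ≠ w' → (ORpow H (M * s)).Adj (F w) (F w') := by
  refine ⟨fun w q => g (w (finProdFinEquiv.symm q).1) (finProdFinEquiv.symm q).2, ?_, ?_⟩
  · intro w w' h
    funext j
    apply hinj
    funext p
    have h2 := congrFun h (finProdFinEquiv (j, p))
    simpa using h2
  · intro w w' hne
    have hdj : ∃ j, w j ≠ w' j := by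
      by_contra hall
      push_neg at hall
      exact hne (funext hall)
    obtain ⟨j, hj⟩ := hdj
    obtain ⟨p, hp⟩ := hadj _ _ hj
    exact ⟨finProdFinEquiv (j, p), by simpa using hp⟩

/-- The underlying "word" vertices of the key construction. -/
def mycWord {V : Type*} (m k : ℕ) (f : Fin (m + 1) → (Fin k → V))
    (x : Fin (m + 1) → Fin (m + 1)) : Fin ((m + 1) * k) → (V × Bool ⊕ Unit) :=
  fun q => Sum.inl (f (x (finProdFinEquiv.symm q).1) (finProdFinEquiv.symm q).2,
    decide ((finProdFinEquiv.symm q).1 = ∑ j, x j))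

lemma mycWord_eval {V : Type*} (m k : ℕ) (f : Fin (m + 1) → (Fin k → V))
    (x : Fin (m + 1) → Fin (m + 1)) (j : Fin (m + 1)) (p : Fin k) :
    mycWord m k f x (finProdFinEquiv (j, p))
      = Sum.inl (f (x j) p, decide (j = ∑ i, x i)) := by
  simp [mycWord]

/-- The key construction: from a clique of size `m+1` in `ORpow G k` we build an
injective pairwise-adjacent family of size `(m+1)^(m+1) + 1` in
`ORpow (mycielskian G) ((m+1) * k)`. -/
lemma myc_block_family {V : Type*} (G : SimpleGraph V) (m k : ℕ) (hk : 1 ≤ k)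
    (f : Fin (m + 1) → (Fin k → V)) (hinj : Function.Injective f)
    (hadj : ∀ i j, i ≠ j → (ORpow G k).Adj (f i) (f j)) :
    ∃ F : ((Fin (m + 1) → Fin (m + 1)) ⊕ Unit) → (Fin ((m + 1) * k) → (V × Bool ⊕ Unit)),
      Function.Injective F ∧
      ∀ i j, i ≠ j → (ORpow (mycielskian G) ((m + 1) * k)).Adj (F i) (F j) := by
  classical
  set σ : (Fin (m + 1) → Fin (m + 1)) → Fin (m + 1) := fun x => ∑ j, x j with hσdef
  set F : ((Fin (m + 1) → Fin (m + 1)) ⊕ Unit) → (Fin ((m + 1) * k) → (V × Bool ⊕ Unit)) :=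
    Sum.elim (mycWord m k f) (fun _ _ => Sum.inr ()) with hFdef
  have q0 : Fin ((m + 1) * k) := ⟨0, Nat.mul_pos (Nat.succ_pos m) (by omega)⟩
  -- adjacency between two word-vertices
  have adjWW : ∀ x y : Fin (m + 1) → Fin (m + 1), x ≠ y →
      (ORpow (mycielskian G) ((m + 1) * k)).Adj (F (Sum.inl x)) (F (Sum.inl y)) := by
    intro x y hxy
    by_cases hσxy : σ x = σ y
    · -- find a coordinate off the marked one where they differ
      have hex : ∃ j, j ≠ σ x ∧ x j ≠ y j := by
        by_contra hall
        push_neg at hall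
        have hoff : ∀ j ∈ Finset.univ.erase (σ x), x j = y j := by
          intro j hj
          exact hall j (Finset.mem_erase.mp hj).1
        have hsum : x (σ x) + ∑ j ∈ Finset.univ.erase (σ x), x j
            = y (σ x) + ∑ j ∈ Finset.univ.erase (σ x), y j := by
          rw [Finset.add_sum_erase _ x (Finset.mem_univ (σ x)),
            Finset.add_sum_erase _ y (Finset.mem_univ (σ x))]
          exact hσxy
        rw [Finset.sum_congr rfl hoff] at hsum
        have hxs : x (σ x) = y (σ x) := add_right_cancel hsum
        apply hxy
        funext j
        by_cases hj : j = σ x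
        · rw [hj]; exact hxs
        · exact hall j hj
      obtain ⟨j, hjσ, hj⟩ := hex
      obtain ⟨p, hp⟩ := hadj _ _ hj
      refine ⟨finProdFinEquiv (j, p), ?_⟩
      show (mycielskian G).Adj (mycWord m k f x _) (mycWord m k f y _)
      rw [mycWord_eval, mycWord_eval]
      exact ⟨hp, Or.inl (decide_eq_false hjσ)⟩
    · obtain ⟨j, hj⟩ := Function.ne_iff.mp hxy
      obtain ⟨p, hp⟩ := hadj _ _ hj
      refine ⟨finProdFinEquiv (j, p), ?_⟩
      show (mycielskian G).Adj (mycWord m k f x _) (mycWord m k f y _)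
      rw [mycWord_eval, mycWord_eval]
      refine ⟨hp, ?_⟩
      by_cases hjx : j = σ x
      · refine Or.inr (decide_eq_false ?_)
        intro hjy
        exact hσxy (by rw [← hjx, hjy])
      · exact Or.inl (decide_eq_false hjx)
  -- adjacency between a word-vertex and the z-vertex
  have adjWZ : ∀ x : Fin (m + 1) → Fin (m + 1),
      (ORpow (mycielskian G) ((m + 1) * k)).Adj (F (Sum.inl x)) (F (Sum.inr ())) := by
    intro x
    refine ⟨finProdFinEquiv (σ x, ⟨0, by omega⟩), ?_⟩
    show (mycielskian G).Adj (mycWord m k f x _) (Sum.inr ())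
    rw [mycWord_eval]
    show decide (σ x = σ x) = true
    exact decide_eq_true rfl
  refine ⟨F, ?_, ?_⟩
  · rintro (x | ⟨⟩) (y | ⟨⟩) h
    · have hxy : x = y := by
        funext j
        apply hinj
        funext p
        have h2 := congrFun h (finProdFinEquiv (j, p))
        simp only [hFdef, Sum.elim_inl] at h2
        rw [mycWord_eval, mycWord_eval] at h2
        simp only [Sum.inl.injEq, Prod.mk.injEq] at h2
        exact h2.1
      rw [hxy]
    · have h2 := congrFun h q0
      simp only [hFdef, Sum.elim_inl, Sum.elim_inr, mycWord] at h2
      exact absurd h2 (by simp)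
    · have h2 := congrFun h q0
      simp only [hFdef, Sum.elim_inl, Sum.elim_inr, mycWord] at h2
      exact absurd h2 (by simp)
    · rfl
  · rintro (x | ⟨⟩) (y | ⟨⟩) h
    · exact adjWW x y (by rintro rfl; exact h rfl)
    · exact adjWZ x
    · exact (adjWZ y).symm
    · exact absurd rfl h

open Filter in
/-- If the Shannon OR-capacity `C_OR(G)` (the limit of `ω(G^t)^(1/t)`, bundled as a
`Tendsto` hypothesis) is attained in finite length, i.e. `C_OR(G) = ω(G^k)^(1/k)` for
some positive integer `k`, then `C_OR(M(G)) > C_OR(G)`. -/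
theorem shannonORcapacity_mycielskian_gt {V : Type*} [Fintype V] (G : SimpleGraph V)
    (c cM : ℝ)
    (hc : Tendsto (fun t : ℕ => ((ORpow G t).cliqueNum : ℝ) ^ ((1 : ℝ) / t))
      atTop (nhds c))
    (hcM : Tendsto
      (fun t : ℕ => ((ORpow (mycielskian G) t).cliqueNum : ℝ) ^ ((1 : ℝ) / t))
      atTop (nhds cM))
    (k : ℕ) (hk : 1 ≤ k)
    (hfin : c = ((ORpow G k).cliqueNum : ℝ) ^ ((1 : ℝ) / k)) :
    c < cM := by
  classical
  have hk0 : (k : ℝ) ≠ 0 := Nat.cast_ne_zero.mpr (by omega)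
  rcases Nat.eq_zero_or_pos ((ORpow G k).cliqueNum) with hn0 | hnpos
  · -- empty case: c = 0 < 1 ≤ cM
    have hc0 : c = 0 := by
      rw [hfin, hn0, Nat.cast_zero, Real.zero_rpow (one_div_ne_zero hk0)]
    have h1 : (1 : ℝ) ≤ cM := by
      refine ge_of_tendsto hcM (Filter.Eventually.of_forall fun t => ?_)
      have hω : 1 ≤ (ORpow (mycielskian G) t).cliqueNum := by
        have h2 := le_cliqueNum_of_family (ORpow (mycielskian G) t)
          (fun _ : Unit => (fun _ => Sum.inr () : Fin t → (V × Bool ⊕ Unit)))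
          (fun a b _ => Subsingleton.elim a b)
          (fun i j hij => absurd (Subsingleton.elim i j) hij)
        simpa using h2
      calc (1 : ℝ) = 1 ^ ((1 : ℝ) / t) := (Real.one_rpow _).symm
        _ ≤ _ := Real.rpow_le_rpow (by norm_num) (by exact_mod_cast hω) (by positivity)
    rw [hc0]; linarith
  · obtain ⟨m, hcl⟩ : ∃ m, (ORpow G k).cliqueNum = m + 1 :=
      ⟨(ORpow G k).cliqueNum - 1, by omega⟩
    -- extract a clique of size m+1 in ORpow G k
    obtain ⟨s, hs⟩ := (ORpow G k).exists_isNClique_cliqueNum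
    rw [hcl] at hs
    have hcard : s.card = m + 1 := hs.card_eq
    let e : Fin (m + 1) → {x // x ∈ s} := fun i => s.equivFin.symm (Fin.cast hcard.symm i)
    let f : Fin (m + 1) → (Fin k → V) := fun i => (e i : Fin k → V)
    have hfinj : Function.Injective f := by
      intro i j hij
      have : e i = e j := Subtype.ext hij
      have h2 := s.equivFin.symm.injective this
      simpa [Fin.ext_iff] using congrArg Fin.val h2
    have hfadj : ∀ i j, i ≠ j → (ORpow G k).Adj (f i) (f j) := by
      intro i j hij
      exact hs.isClique (Finset.mem_coe.mpr (e i).2) (Finset.mem_coe.mpr (e j).2)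
        (fun h => hij (hfinj h))
    obtain ⟨F, hFinj, hFadj⟩ := myc_block_family G m k hk f hfinj hfadj
    -- key estimate for every power M
    have hkey : ∀ M : ℕ, ((m + 1) ^ (m + 1) + 1) ^ M
        ≤ (ORpow (mycielskian G) (M * ((m + 1) * k))).cliqueNum := by
      intro M
      obtain ⟨F2, hF2inj, hF2adj⟩ := ORpow_family_pow (mycielskian G) F hFinj
        (fun i j hij => hFadj i j hij) M
      have h2 := le_cliqueNum_of_family (ORpow (mycielskian G) (M * ((m + 1) * k)))
        F2 hF2inj (fun w w' h => hF2adj w w' h)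
      calc ((m + 1) ^ (m + 1) + 1) ^ M
          = Fintype.card (Fin M → (Fin (m + 1) → Fin (m + 1)) ⊕ Unit) := by
            simp [Fintype.card_fun]
        _ ≤ _ := h2
    -- pass to the limit along the subsequence M * ((m+1)*k)
    set sN : ℕ := (m + 1) * k with hsN
    have hsN1 : 1 ≤ sN := by
      have : 1 * 1 ≤ (m + 1) * k := Nat.mul_le_mul (by omega) hk
      simpa using this
    have hsR : (sN : ℝ) ≠ 0 := Nat.cast_ne_zero.mpr (by omega)
    set P : ℕ := (m + 1) ^ (m + 1) + 1 with hP
    have hA : (P : ℝ) ^ ((1 : ℝ) / sN) ≤ cM := by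
      have hφ : Tendsto (fun M : ℕ => M * sN) atTop atTop :=
        tendsto_atTop_mono (fun M => Nat.le_mul_of_pos_right M (by omega)) tendsto_id
      refine ge_of_tendsto (hcM.comp hφ) ?_
      filter_upwards [eventually_ge_atTop 1] with M hM
      have hM0 : (M : ℝ) ≠ 0 := Nat.cast_ne_zero.mpr (by omega)
      have h1 : ((P : ℝ)) ^ (M : ℕ) ≤ ((ORpow (mycielskian G) (M * sN)).cliqueNum : ℝ) := by
        exact_mod_cast hkey M
      have heq : (P : ℝ) ^ ((1 : ℝ) / sN)
          = ((P : ℝ) ^ (M : ℕ)) ^ ((1 : ℝ) / ((M * sN : ℕ) : ℝ)) := by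
        rw [← Real.rpow_natCast (P : ℝ) M, ← Real.rpow_mul (by positivity)]
        congr 1
        push_cast
        field_simp
      have h3 : ((P : ℝ) ^ (M : ℕ)) ^ ((1 : ℝ) / ((M * sN : ℕ) : ℝ))
          ≤ (((ORpow (mycielskian G) (M * sN)).cliqueNum : ℝ)) ^ ((1 : ℝ) / ((M * sN : ℕ) : ℝ)) :=
        Real.rpow_le_rpow (by positivity) h1 (by positivity)
      calc (P : ℝ) ^ ((1 : ℝ) / sN) = _ := heq
        _ ≤ _ := h3
    -- finally compare c with the new bound
    have hc_lt : c < (P : ℝ) ^ ((1 : ℝ) / sN) := by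
      rw [hfin, hcl]
      have e1 : (((m + 1 : ℕ)) : ℝ) ^ ((1 : ℝ) / k)
          = (((m + 1 : ℕ) : ℝ) ^ ((m + 1 : ℕ)) : ℝ) ^ ((1 : ℝ) / (sN : ℝ)) := by
        rw [← Real.rpow_natCast (((m + 1 : ℕ)) : ℝ) (m + 1), ← Real.rpow_mul (by positivity)]
        congr 1
        rw [hsN]
        push_cast
        field_simp
      rw [e1]
      have hPlt : (((m + 1 : ℕ) : ℝ) ^ ((m + 1 : ℕ)) : ℝ) < (P : ℝ) := by
        rw [hP]
        push_cast
        linarith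
      exact Real.rpow_lt_rpow (by positivity) hPlt (by positivity)
    linarith
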